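/- arXiv:2303.10262 — 3 statements merged into one kernel-verified Lean document; each statement's English description precedes it below -/
import Mathlib

section
/- Let H be a Hilbert space, 𝟙 ∈ H a nonzero vector, z ∈ H decomposed as z = γ𝟙 + z^⊥ with ⟨z^⊥, 𝟙⟩ = 0 and ‖𝟙‖ = 1. Then for any a, b ∈ ℝ, ‖a𝟙 + bz‖² ≥ λ_m · min(1, ‖z^⊥‖²) · (a² + b²), where λ_m = ((γ²+2) − √((γ²+2)²−4))/2. -/
open scoped RealInnerProductSpace

/-- Quadratic-form lower bound in a Hilbert space:
`‖a𝟙 + bz‖² ≥ λ_m · min(1, ‖z^⊥‖²) · (a² + b²)` where `z = γ𝟙 + z^⊥`, `⟨z^⊥, 𝟙⟩ = 0`,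
`‖𝟙‖ = 1` and `λ_m = ((γ²+2) − √((γ²+2)²−4))/2`. -/
theorem stmt_5 {H : Type*} [NormedAddCommGroup H] [InnerProductSpace ℝ H]
    (one z zperp : H) (γ : ℝ)
    (hone_ne : one ≠ 0) (hone : ‖one‖ = 1)
    (hz : z = γ • one + zperp) (horth : ⟪zperp, one⟫ = 0) :
    ∀ a b : ℝ,
      ‖a • one + b • z‖ ^ 2 ≥
        (((γ ^ 2 + 2) - Real.sqrt ((γ ^ 2 + 2) ^ 2 - 4)) / 2) *
          min 1 (‖zperp‖ ^ 2) * (a ^ 2 + b ^ 2) := by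
  intro a b
  set r := Real.sqrt ((γ ^ 2 + 2) ^ 2 - 4) with hr_def
  set lam := ((γ ^ 2 + 2) - r) / 2 with hlam_def
  have hnn : (0:ℝ) ≤ (γ ^ 2 + 2) ^ 2 - 4 := by nlinarith [sq_nonneg γ, sq_nonneg (γ^2)]
  have hr_sq : r ^ 2 = (γ ^ 2 + 2) ^ 2 - 4 := Real.sq_sqrt hnn
  have hr_nonneg : 0 ≤ r := Real.sqrt_nonneg _
  have hroot : lam ^ 2 - (γ ^ 2 + 2) * lam + 1 = 0 := by
    rw [hlam_def]; field_simp; nlinarith [hr_sq]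
  have hlam_nonneg : 0 ≤ lam := by
    rw [hlam_def]
    nlinarith [hr_sq, hr_nonneg, sq_nonneg γ]
  have hlam_le1 : lam ≤ 1 := by
    rw [hlam_def]
    nlinarith [hr_sq, hr_nonneg, sq_nonneg γ]
  -- key quadratic form inequality
  have hquad : (a + γ * b) ^ 2 + b ^ 2 ≥ lam * (a ^ 2 + b ^ 2) := by
    rcases eq_or_lt_of_le hlam_le1 with h1 | h1
    · have hγ : γ = 0 := by
        have := hroot
        rw [← h1] at this
        nlinarith [sq_nonneg γ]
      rw [h1, hγ]
      nlinarith
    · have hb : b ^ 2 * (lam ^ 2 - (γ ^ 2 + 2) * lam + 1) = 0 := by rw [hroot]; ring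
      nlinarith [sq_nonneg ((1 - lam) * a + γ * b), hb, h1]
  -- norm computation
  have hx : a • one + b • z = (a + γ * b) • one + b • zperp := by
    rw [hz]; module
  have hip : ⟪(a + γ * b) • one, b • zperp⟫ = 0 := by
    rw [real_inner_smul_left, real_inner_smul_right, real_inner_comm, horth]
    ring
  have hnorm : ‖a • one + b • z‖ ^ 2 = (a + γ * b) ^ 2 + b ^ 2 * ‖zperp‖ ^ 2 := by
    rw [hx, ← real_inner_self_eq_norm_sq, inner_add_add_self, hip]
    simp [real_inner_smul_left, real_inner_smul_right, horth, real_inner_self_eq_norm_sq,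
      hone, norm_smul, mul_pow, sq_abs]
  rw [hnorm]
  set m := min 1 (‖zperp‖ ^ 2) with hm_def
  have hm0 : 0 ≤ m := le_min (by norm_num) (sq_nonneg _)
  have hm1 : m ≤ 1 := min_le_left _ _
  have hm2 : m ≤ ‖zperp‖ ^ 2 := min_le_right _ _
  clear_value r lam m
  have h4 : lam * m * (a ^ 2 + b ^ 2) ≤ m * ((a + γ * b) ^ 2 + b ^ 2) := by
    calc lam * m * (a ^ 2 + b ^ 2) = m * (lam * (a ^ 2 + b ^ 2)) := by ring
      _ ≤ m * ((a + γ * b) ^ 2 + b ^ 2) := mul_le_mul_of_nonneg_left hquad hm0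
  have h5 : m * ((a + γ * b) ^ 2 + b ^ 2) ≤ (a + γ * b) ^ 2 + b ^ 2 * ‖zperp‖ ^ 2 := by
    have t1 : m * (a + γ * b) ^ 2 ≤ 1 * (a + γ * b) ^ 2 :=
      mul_le_mul_of_nonneg_right hm1 (sq_nonneg _)
    have t2 : m * b ^ 2 ≤ ‖zperp‖ ^ 2 * b ^ 2 :=
      mul_le_mul_of_nonneg_right hm2 (sq_nonneg _)
    have hex : m * ((a + γ * b) ^ 2 + b ^ 2) = m * (a + γ * b) ^ 2 + m * b ^ 2 := by ring
    rw [hex]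
    linarith [t1, t2]
  linarith [h4, h5]
end

section
/- Consider the homogeneous LQ graphon game with constant graphon W(x,y) = c, 0 < c, and parameters η ∈ ℝ₊² with η₂c < 1. The unique Nash equilibrium is s̄_η = (η₁/(1 − η₂c))𝟙. Consequently, if (η₁, η₂) ≠ (η̄₁, η̄₂) but η₁/(1−η₂c) = η̄₁/(1−η̄₂c), then s̄_η = s̄_{η̄}, so the parameter is not identifiable. -/
open MeasureTheory
open scoped RealInnerProductSpace

/-- The space `L²([0,1])`. -/
noncomputable abbrev L2I := Lp ℝ 2 (volume.restrict (Set.Icc (0:ℝ) 1))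

lemma aux_solve (c : ℝ) (W : L2I →L[ℝ] L2I) (one : L2I) (hone : ‖one‖ = 1)
    (hW : ∀ f : L2I, W f = (c * ⟪one, f⟫) • one)
    (η₁ η₂ : ℝ) (hcontr : η₂ * c < 1) (sη : L2I)
    (heq : sη = η₁ • one + η₂ • W sη) :
    sη = (η₁ / (1 - η₂ * c)) • one := by
  set a : ℝ := ⟪one, sη⟫ with ha
  have honesq : ⟪one, one⟫ = (1:ℝ) := by
    rw [real_inner_self_eq_norm_sq, hone]; norm_num
  have ha2 : a = η₁ + η₂ * (c * a) := by
    conv_lhs => rw [ha, heq]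
    rw [hW, inner_add_right, inner_smul_right, inner_smul_right, inner_smul_right, honesq]
    ring
  have hne : (1 - η₂ * c) ≠ 0 := by linarith
  have haval : a = η₁ / (1 - η₂ * c) := by
    field_simp
    linarith [ha2]
  have : sη = (η₁ + η₂ * (c * a)) • one := by
    rw [heq, hW, add_smul]
    congr 1
    rw [smul_smul]
  rw [this, ← ha2, haval]

/-- For the constant graphon `W(x,y) = c`, i.e. `W f = c⟨𝟙,f⟩𝟙`, the unique LQ Nash
equilibrium is `s̄_η = (η₁/(1−η₂c))𝟙`; consequently two distinct parameters with
`η₁/(1−η₂c) = η̄₁/(1−η̄₂c)` generate the same equilibrium, so the parameter is not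
identifiable. -/
theorem stmt_9 (c : ℝ) (hc : 0 < c)
    (W : L2I →L[ℝ] L2I) (one : L2I) (hone : ‖one‖ = 1)
    (hW : ∀ f : L2I, W f = (c * ⟪one, f⟫) • one)
    (η₁ η₂ ηb₁ ηb₂ : ℝ)
    (hη : 0 ≤ η₁ ∧ 0 ≤ η₂) (hηb : 0 ≤ ηb₁ ∧ 0 ≤ ηb₂)
    (hcontr : η₂ * c < 1) (hcontrb : ηb₂ * c < 1)
    (sη sηb : L2I)
    (heq : sη = η₁ • one + η₂ • W sη)
    (heqb : sηb = ηb₁ • one + ηb₂ • W sηb) :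
    sη = (η₁ / (1 - η₂ * c)) • one ∧
    ((η₁, η₂) ≠ (ηb₁, ηb₂) → η₁ / (1 - η₂ * c) = ηb₁ / (1 - ηb₂ * c) → sη = sηb) := by
  have h1 := aux_solve c W one hone hW η₁ η₂ hcontr sη heq
  have h2 := aux_solve c W one hone hW ηb₁ ηb₂ hcontrb sηb heqb
  exact ⟨h1, fun _ hval => by rw [h1, h2, hval]⟩
end

section
/- Under the SBM LQ game assumptions (Q symmetric with entries in [0,1] and every community aggregate z̄̄_i = [QΔ_π s̄̄_{η̄}]_i > 0, θ₁ > 0, max_k η_k λ_max(QΔ_π) < 1 for all η ∈ Ξ ⊂ ℝ₊^K), the parameter η̄ is identifiable: ‖η − η̄‖ ≤ (2/(min_i z̄̄_i · √(min_k π_k))) · ‖s̄_η − s̄_{η̄}‖_{L²} for all η ∈ Ξ. -/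
/-!
Subtracting the equilibrium equations `(I - Δ_η Q Δ_π) s̄̄_η = θ₁ 𝟙` for `η` and `η̄` gives
`(I - Δ_η Q Δ_π)(s̄̄_η - s̄̄_η̄) = Δ_{η - η̄} z̄̄`. Measure vectors in the `π`-weighted norm
`‖Δ_{√π} ·‖`, which is the `L²` norm of the corresponding step function on `[0,1]`. There `Q Δ_π`
acts like the symmetric nonnegative matrix `Δ_{√π} Q Δ_{√π}`, whose operator norm is its largest
eigenvalue `λ_max`, so `‖Δ_η Q Δ_π‖ ≤ max_k η_k λ_max < 1`; this also makes `I - Δ_η Q Δ_π`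
invertible. Hence `‖Δ_{η - η̄} z̄̄‖ ≤ 2 ‖s̄̄_η - s̄̄_η̄‖_π / √(min π)`, and the left side is at
least `min z̄̄ ‖η - η̄‖`.
-/

open Matrix MeasureTheory WithLp

namespace Matrix

variable {n : Type*} [Fintype n]

lemma spectrum_mul_comm [DecidableEq n] {R : Type*} [CommRing R] (A B : Matrix n n R) :
    spectrum R (A * B) = spectrum R (B * A) := by
  ext r
  simp only [mem_spectrum_iff_not_isUnit_eval_charpoly, charpoly_mul_comm]

lemma IsHermitian.dotProduct_mulVec_le [DecidableEq n] {S : Matrix n n ℝ} (hS : S.IsHermitian)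
    {c : ℝ} (hc : ∀ μ ∈ spectrum ℝ S, μ ≤ c) (x : n → ℝ) : x ⬝ᵥ S *ᵥ x ≤ c * (x ⬝ᵥ x) := by
  have hpsd : (algebraMap ℝ _ c - S).PosSemidef := by
    refine posSemidef_iff_isHermitian_and_spectrum_nonneg.2 ⟨(isHermitian_diagonal _).sub hS, ?_⟩
    rw [← spectrum.singleton_sub_eq]
    rintro _ ⟨_, rfl, μ, hμ, rfl⟩
    exact sub_nonneg.2 (hc μ hμ)
  have := hpsd.dotProduct_mulVec_nonneg x
  rw [Algebra.algebraMap_eq_smul_one, star_trivial, sub_mulVec, dotProduct_sub, smul_mulVec,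
    one_mulVec, dotProduct_smul, smul_eq_mul] at this
  linarith

lemma abs_dotProduct_mulVec_le {S : Matrix n n ℝ} (hS : ∀ i j, 0 ≤ S i j) (x : n → ℝ) :
    |x ⬝ᵥ S *ᵥ x| ≤ |x| ⬝ᵥ S *ᵥ |x| := by
  simp only [dotProduct, mulVec, Pi.abs_apply]
  refine (Finset.abs_sum_le_sum_abs _ _).trans (Finset.sum_le_sum fun i _ => ?_)
  rw [abs_mul]
  refine mul_le_mul_of_nonneg_left ((Finset.abs_sum_le_sum_abs _ _).trans_eq ?_) (abs_nonneg _)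
  simp [abs_mul, abs_of_nonneg (hS _ _)]

/-- Since `|xᵀ S x| ≤ |x|ᵀ S |x|` for an entrywise nonnegative `S`, an upper bound on the spectrum
also bounds it from below, hence bounds the operator norm. -/
lemma IsHermitian.norm_toEuclideanCLM_le [DecidableEq n] [Nonempty n] {S : Matrix n n ℝ}
    (hS : S.IsHermitian) (hS₀ : ∀ i j, 0 ≤ S i j) {c : ℝ} (hc : ∀ μ ∈ spectrum ℝ S, μ ≤ c) :
    ‖toEuclideanCLM (𝕜 := ℝ) S‖ ≤ c := by
  have hquad (x : n → ℝ) : |x ⬝ᵥ S *ᵥ x| ≤ c * (x ⬝ᵥ x) := by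
    have habs : |x| ⬝ᵥ |x| = x ⬝ᵥ x := by simp only [dotProduct, Pi.abs_apply, abs_mul_abs_self]
    exact (abs_dotProduct_mulVec_le hS₀ x).trans (habs ▸ hS.dotProduct_mulVec_le hc |x|)
  have hc₀ : 0 ≤ c := by
    obtain ⟨i⟩ := ‹Nonempty n›
    simpa using (abs_nonneg _).trans (hquad (Pi.single i 1))
  have hsymm : (toEuclideanCLM (𝕜 := ℝ) S : EuclideanSpace ℝ n →ₗ[ℝ] _).IsSymmetric := by
    rw [coe_toEuclideanCLM_eq_toEuclideanLin]
    exact isSymmetric_toEuclideanLin_iff.2 hS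
  rw [ContinuousLinearMap.norm_eq_iSup_rayleighQuotient _ hsymm]
  refine ciSup_le fun x => ?_
  rcases eq_or_ne x 0 with rfl | hx
  · simpa using hc₀
  rw [ContinuousLinearMap.rayleighQuotient, ContinuousLinearMap.reApplyInnerSelf_apply, abs_div,
    abs_sq, div_le_iff₀ (by positivity), real_inner_comm, inner_toEuclideanCLM,
    ← real_inner_self_eq_norm_sq, EuclideanSpace.inner_eq_star_dotProduct]
  simpa [dotProduct_comm] using hquad x

lemma isUnit_det_one_sub_of_norm_mulVec_lt [DecidableEq n] {M D : Matrix n n ℝ}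
    (h : ∀ v ≠ 0, ‖toLp 2 (D *ᵥ (M *ᵥ v))‖ < ‖toLp 2 (D *ᵥ v)‖) : IsUnit (1 - M).det := by
  rw [isUnit_iff_ne_zero]
  intro hdet
  obtain ⟨v, hv, hfix⟩ := exists_mulVec_eq_zero_iff.2 hdet
  rw [sub_mulVec, one_mulVec, sub_eq_zero] at hfix
  exact (h v hv).ne (by rw [← hfix])

lemma mulVec_one_sub_diagonal_mul_sub [DecidableEq n] {R : Type*} [CommRing R]
    {A : Matrix n n R} {η η' x x' b : n → R}
    (hx : (1 - diagonal η * A) *ᵥ x = b) (hx' : (1 - diagonal η' * A) *ᵥ x' = b) :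
    (1 - diagonal η * A) *ᵥ (x - x') = diagonal (η - η') *ᵥ (A *ᵥ x') := by
  rw [mulVec_sub, hx, ← hx', show diagonal (η - η') = diagonal η - diagonal η' from
    (diagonal_sub η η').symm]
  simp only [sub_mulVec, one_mulVec, ← mulVec_mulVec]
  abel

end Matrix

namespace EuclideanSpace

variable {n : Type*} [Fintype n]

lemma norm_toLp_le_of_abs_le {u v : n → ℝ} (h : ∀ i, |u i| ≤ |v i|) :
    ‖toLp 2 u‖ ≤ ‖toLp 2 v‖ := by
  simp only [EuclideanSpace.norm_eq, Real.norm_eq_abs, sq_abs]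
  exact Real.sqrt_le_sqrt (Finset.sum_le_sum fun i _ => sq_le_sq.2 (by simpa using h i))

variable [DecidableEq n]

lemma norm_toLp_diagonal_mulVec_le {η : n → ℝ} {σ : ℝ} (hσ : 0 ≤ σ) (hη : ∀ i, |η i| ≤ σ)
    (u : n → ℝ) : ‖toLp 2 (diagonal η *ᵥ u)‖ ≤ σ * ‖toLp 2 u‖ := by
  rw [← abs_of_nonneg hσ, ← Real.norm_eq_abs, ← norm_smul, ← toLp_smul]
  refine norm_toLp_le_of_abs_le fun i => ?_
  rw [mulVec_diagonal, Pi.smul_apply, smul_eq_mul, abs_mul, abs_mul, abs_of_nonneg hσ]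
  exact mul_le_mul_of_nonneg_right (hη i) (abs_nonneg _)

lemma norm_toLp_sqrt_diagonal_mulVec_sq {w : n → ℝ} (hw : ∀ i, 0 ≤ w i) (v : n → ℝ) :
    ‖toLp 2 (diagonal (fun i => √(w i)) *ᵥ v)‖ ^ 2 = ∑ i, w i * v i ^ 2 := by
  simp [EuclideanSpace.real_norm_sq_eq, mulVec_diagonal, mul_pow, Real.sq_sqrt (hw _)]

lemma mul_norm_toLp_le_norm_toLp_diagonal_mulVec {w : n → ℝ} {a : ℝ} (ha : 0 ≤ a)
    (hw : ∀ i, a ≤ |w i|) (v : n → ℝ) : a * ‖toLp 2 v‖ ≤ ‖toLp 2 (diagonal w *ᵥ v)‖ := by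
  rw [← abs_of_nonneg ha, ← Real.norm_eq_abs, ← norm_smul, ← toLp_smul]
  refine norm_toLp_le_of_abs_le fun i => ?_
  rw [mulVec_diagonal, Pi.smul_apply, smul_eq_mul, abs_mul, abs_mul, abs_of_nonneg ha]
  exact mul_le_mul_of_nonneg_right (hw i) (abs_nonneg _)

end EuclideanSpace

open EuclideanSpace

section WeightedNorm

variable {n : Type*} [Fintype n] [DecidableEq n] [Nonempty n] {Q : Matrix n n ℝ} {w : n → ℝ}
  {c : ℝ}

lemma norm_weighted_mulVec_le (hQ : Q.IsSymm) (hQ₀ : ∀ i j, 0 ≤ Q i j) (hw : ∀ i, 0 ≤ w i)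
    (hc : ∀ μ ∈ spectrum ℝ (Q * diagonal w), μ ≤ c) (v : n → ℝ) :
    ‖toLp 2 (diagonal (fun i => √(w i)) *ᵥ ((Q * diagonal w) *ᵥ v))‖ ≤
      c * ‖toLp 2 (diagonal (fun i => √(w i)) *ᵥ v)‖ := by
  set D := diagonal fun i => √(w i)
  have hDD : D * D = diagonal w := by
    simp only [D, diagonal_mul_diagonal, Real.mul_self_sqrt (hw _)]
  have hS : (D * Q * D).IsHermitian := by
    rw [isHermitian_iff_isSymm, IsSymm, transpose_mul, transpose_mul, diagonal_transpose, hQ.eq,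
      Matrix.mul_assoc]
  have hS₀ (i j : n) : 0 ≤ (D * Q * D) i j := by
    simp only [D, mul_diagonal, diagonal_mul]
    exact mul_nonneg (mul_nonneg (Real.sqrt_nonneg _) (hQ₀ i j)) (Real.sqrt_nonneg _)
  have hspec : spectrum ℝ (D * Q * D) = spectrum ℝ (Q * diagonal w) := by
    rw [Matrix.mul_assoc, spectrum_mul_comm, Matrix.mul_assoc, hDD]
  have hconj : D *ᵥ ((Q * diagonal w) *ᵥ v) = (D * Q * D) *ᵥ (D *ᵥ v) := by
    rw [mulVec_mulVec, mulVec_mulVec, ← hDD, Matrix.mul_assoc, Matrix.mul_assoc]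
  rw [hconj, ← toEuclideanCLM_toLp]
  exact (ContinuousLinearMap.le_opNorm _ _).trans
    (mul_le_mul_of_nonneg_right (hS.norm_toEuclideanCLM_le hS₀ (hspec ▸ hc)) (norm_nonneg _))

lemma norm_weighted_diagonal_mul_mulVec_le (hQ : Q.IsSymm) (hQ₀ : ∀ i j, 0 ≤ Q i j)
    (hw : ∀ i, 0 ≤ w i) (hc : ∀ μ ∈ spectrum ℝ (Q * diagonal w), μ ≤ c) {η : n → ℝ}
    (hη : ∀ i, 0 ≤ η i) (v : n → ℝ) :
    ‖toLp 2 (diagonal (fun i => √(w i)) *ᵥ ((diagonal η * Q * diagonal w) *ᵥ v))‖ ≤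
      (⨆ i, η i) * c * ‖toLp 2 (diagonal (fun i => √(w i)) *ᵥ v)‖ := by
  have hle (i : n) : η i ≤ ⨆ i, η i := le_ciSup (Set.finite_range η).bddAbove i
  have hσ : 0 ≤ ⨆ i, η i := (hη _).trans (hle (Classical.arbitrary n))
  have hcomm : diagonal (fun i => √(w i)) *ᵥ ((diagonal η * Q * diagonal w) *ᵥ v) =
      diagonal η *ᵥ (diagonal (fun i => √(w i)) *ᵥ ((Q * diagonal w) *ᵥ v)) := by
    simp only [mulVec_mulVec, ← Matrix.mul_assoc, (commute_diagonal (fun i => √(w i)) η).eq]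
  rw [hcomm, mul_assoc]
  exact (norm_toLp_diagonal_mulVec_le hσ (fun i => (abs_of_nonneg (hη i)).trans_le (hle i))
    _).trans (mul_le_mul_of_nonneg_left (norm_weighted_mulVec_le hQ hQ₀ hw hc v) hσ)

lemma isUnit_det_one_sub_diagonal_mul_mul_diagonal (hQ : Q.IsSymm) (hQ₀ : ∀ i j, 0 ≤ Q i j)
    (hw : ∀ i, 0 < w i) (hc : ∀ μ ∈ spectrum ℝ (Q * diagonal w), μ ≤ c) {η : n → ℝ}
    (hη : ∀ i, 0 ≤ η i) (hηc : (⨆ i, η i) * c < 1) :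
    IsUnit (1 - diagonal η * Q * diagonal w).det := by
  refine isUnit_det_one_sub_of_norm_mulVec_lt (D := diagonal fun i => √(w i)) fun v hv => ?_
  have hDv : diagonal (fun i => √(w i)) *ᵥ v ≠ 0 := fun h => hv <| funext fun i => by
    simpa [mulVec_diagonal, (Real.sqrt_pos.2 (hw i)).ne'] using congrFun h i
  exact (norm_weighted_diagonal_mul_mulVec_le hQ hQ₀ (fun i => (hw i).le) hc hη v).trans_lt
    (mul_lt_of_lt_one_left (norm_pos_iff.2 (by simpa using hDv)) hηc)

end WeightedNorm

section Equilibrium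

variable {n : Type*} [Fintype n] [DecidableEq n] {Q : Matrix n n ℝ} {w : n → ℝ} {c : ℝ}

noncomputable def communityEquilibrium (Q : Matrix n n ℝ) (w η : n → ℝ) (θ : ℝ) : n → ℝ :=
  θ • ((1 - diagonal η * Q * diagonal w)⁻¹ *ᵥ 1)

lemma one_sub_mulVec_communityEquilibrium {η : n → ℝ}
    (hη : IsUnit (1 - diagonal η * Q * diagonal w).det) (θ : ℝ) :
    (1 - diagonal η * (Q * diagonal w)) *ᵥ communityEquilibrium Q w η θ = θ • 1 := by
  rw [communityEquilibrium, ← Matrix.mul_assoc, mulVec_smul, mulVec_mulVec, mul_nonsing_inv _ hη,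
    one_mulVec]

lemma mul_norm_sub_le_two_mul_norm_communityEquilibrium_sub [Nonempty n] (hQ : Q.IsSymm)
    (hQ₀ : ∀ i j, 0 ≤ Q i j) (hw : ∀ i, 0 < w i) (hc : ∀ μ ∈ spectrum ℝ (Q * diagonal w), μ ≤ c)
    {η η' : n → ℝ} (hη : ∀ i, 0 ≤ η i) (hηc : (⨆ i, η i) * c < 1) (hη' : ∀ i, 0 ≤ η' i)
    (hη'c : (⨆ i, η' i) * c < 1) (θ : ℝ) {z m : ℝ} (hz : 0 ≤ z)
    (hzle : ∀ i, z ≤ |((Q * diagonal w) *ᵥ communityEquilibrium Q w η' θ) i|)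
    (hm : ∀ i, m ≤ w i) :
    z * √m * ‖toLp 2 (η - η')‖ ≤ 2 * ‖toLp 2 (diagonal (fun i => √(w i)) *ᵥ
      (communityEquilibrium Q w η θ - communityEquilibrium Q w η' θ))‖ := by
  have hperturb := mulVec_one_sub_diagonal_mul_sub
    (one_sub_mulVec_communityEquilibrium
      (isUnit_det_one_sub_diagonal_mul_mul_diagonal hQ hQ₀ hw hc hη hηc) θ)
    (one_sub_mulVec_communityEquilibrium
      (isUnit_det_one_sub_diagonal_mul_mul_diagonal hQ hQ₀ hw hc hη' hη'c) θ)
  rw [← Matrix.mul_assoc, sub_mulVec, one_mulVec] at hperturb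
  set d := communityEquilibrium Q w η θ - communityEquilibrium Q w η' θ
  set D := diagonal fun i => √(w i)
  have hD (v : n → ℝ) : √m * ‖toLp 2 v‖ ≤ ‖toLp 2 (D *ᵥ v)‖ :=
    mul_norm_toLp_le_norm_toLp_diagonal_mulVec (Real.sqrt_nonneg _) (fun i => by
      rw [abs_of_nonneg (Real.sqrt_nonneg _)]
      exact Real.sqrt_le_sqrt (hm i)) v
  have hcomm : diagonal (η - η') *ᵥ ((Q * diagonal w) *ᵥ communityEquilibrium Q w η' θ) =
      diagonal ((Q * diagonal w) *ᵥ communityEquilibrium Q w η' θ) *ᵥ (η - η') := by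
    ext i
    simp only [mulVec_diagonal, mul_comm]
  calc z * √m * ‖toLp 2 (η - η')‖
      ≤ √m * ‖toLp 2 (d - (diagonal η * Q * diagonal w) *ᵥ d)‖ := by
        rw [mul_comm z, mul_assoc, hperturb, hcomm]
        gcongr
        exact mul_norm_toLp_le_norm_toLp_diagonal_mulVec hz hzle _
    _ ≤ √m * ‖toLp 2 d‖ + √m * ‖toLp 2 ((diagonal η * Q * diagonal w) *ᵥ d)‖ := by
        rw [toLp_sub, ← mul_add]
        gcongr
        exact norm_sub_le _ _
    _ ≤ ‖toLp 2 (D *ᵥ d)‖ + (⨆ i, η i) * c * ‖toLp 2 (D *ᵥ d)‖ :=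
        add_le_add (hD d) ((hD _).trans
          (norm_weighted_diagonal_mul_mulVec_le hQ hQ₀ (fun i => (hw i).le) hc hη d))
    _ ≤ 2 * ‖toLp 2 (D *ᵥ d)‖ := by nlinarith [norm_nonneg (toLp 2 (D *ᵥ d))]

end Equilibrium

namespace MeasureTheory

lemma setIntegral_iUnion_eq_sum_of_eqOn_const {α ι : Type*} [MeasurableSpace α] {μ : Measure α}
    [Fintype ι] {C : ι → Set α} (hC : ∀ k, MeasurableSet (C k))
    (hCdisj : Pairwise (Function.onFun Disjoint C)) (hCfin : ∀ k, μ (C k) ≠ ⊤) {f : α → ℝ}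
    {c : ι → ℝ} (hf : ∀ k, ∀ x ∈ C k, f x = c k) :
    ∫ x in ⋃ k, C k, f x ∂μ = ∑ k, μ.real (C k) * c k := by
  have hfC (k : ι) : ∫ x in C k, f x ∂μ = ∫ _ in C k, c k ∂μ := setIntegral_congr_fun (hC k) (hf k)
  have hint (k : ι) : IntegrableOn f (C k) μ :=
    (integrableOn_const (hCfin k)).congr_fun (fun x hx => (hf k x hx).symm) (hC k)
  simp only [integral_iUnion_fintype hC hCdisj hint, hfC, setIntegral_const, smul_eq_mul]

end MeasureTheory

theorem stmt_17_general (K : ℕ) [NeZero K]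
    (Q : Matrix (Fin K) (Fin K) ℝ) (hQsym : Q.IsSymm)
    (hQrange : ∀ i j, Q i j ∈ Set.Icc (0:ℝ) 1)
    (pi : Fin K → ℝ) (hpi : ∀ k, 0 < pi k)
    (θ₁ : ℝ)
    (Ξ : Set (Fin K → ℝ)) (hΞpos : ∀ η ∈ Ξ, ∀ k, 0 ≤ η k)
    (lamMax : ℝ)
    (hlam : IsGreatest
      {μ : ℝ | Module.End.HasEigenvalue (Matrix.toLin' (Q * Matrix.diagonal pi)) μ} lamMax)
    (hcontr : ∀ η ∈ Ξ, (⨆ k, η k) * lamMax < 1)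
    (ηb : Fin K → ℝ) (hηb : ηb ∈ Ξ)
    -- the communities: a measurable partition of [0,1] with measures π_k
    (C : Fin K → Set ℝ) (hCmeas : ∀ k, MeasurableSet (C k))
    (hCdisj : Pairwise (Function.onFun Disjoint C))
    (hCcover : (⋃ k, C k) = Set.Icc (0:ℝ) 1)
    (hCvol : ∀ k, volume (C k) = ENNReal.ofReal (pi k))
    -- the piecewise-constant graphon equilibrium with community values s̄̄_η
    (s : (Fin K → ℝ) → ℝ → ℝ)
    (hs : ∀ η ∈ Ξ, ∀ k, ∀ x ∈ C k,
      s η x = (θ₁ • ((1 - Matrix.diagonal η * Q * Matrix.diagonal pi)⁻¹).mulVec 1) k)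
    -- the community aggregates, assumed strictly positive
    (zb : Fin K → ℝ)
    (hzb : zb = (Q * Matrix.diagonal pi).mulVec
      (θ₁ • ((1 - Matrix.diagonal ηb * Q * Matrix.diagonal pi)⁻¹).mulVec 1))
    (hzbpos : ∀ i, 0 < zb i) :
    ∀ η ∈ Ξ,
      Real.sqrt (∑ k, (η k - ηb k) ^ 2) ≤
        (2 / ((⨅ i, zb i) * Real.sqrt (⨅ k, pi k))) *
          Real.sqrt (∫ x in Set.Icc (0:ℝ) 1, (s η x - s ηb x) ^ 2) := by
  intro η hη
  obtain ⟨k₀, hk₀⟩ := exists_eq_ciInf_of_finite (f := pi)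
  obtain ⟨i₀, hi₀⟩ := exists_eq_ciInf_of_finite (f := zb)
  have hspec : ∀ μ ∈ spectrum ℝ (Q * diagonal pi), μ ≤ lamMax := fun μ hμ =>
    hlam.2 (Module.End.hasEigenvalue_iff_mem_spectrum.2 (by rwa [spectrum_toLin']))
  have hkey := mul_norm_sub_le_two_mul_norm_communityEquilibrium_sub hQsym
    (fun i j => (hQrange i j).1) hpi hspec (hΞpos η hη) (hcontr η hη) (hΞpos ηb hηb)
    (hcontr ηb hηb) θ₁ (hi₀ ▸ hzbpos i₀).le
    (fun i => ((ciInf_le (Set.finite_range zb).bddBelow i).trans (le_abs_self _)).trans_eq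
      (congrArg abs (congrFun hzb i)))
    (ciInf_le (Set.finite_range pi).bddBelow)
  have hint : ∫ x in Set.Icc (0:ℝ) 1, (s η x - s ηb x) ^ 2 =
      ∑ k, pi k * (communityEquilibrium Q pi η θ₁ k - communityEquilibrium Q pi ηb θ₁ k) ^ 2 := by
    rw [← hCcover, setIntegral_iUnion_eq_sum_of_eqOn_const hCmeas hCdisj (by simp [hCvol])
      (fun k x hx => by rw [hs η hη k x hx, hs ηb hηb k x hx])]
    simp [measureReal_def, hCvol, (hpi _).le, communityEquilibrium]
  rw [hint, ← norm_toLp_sqrt_diagonal_mulVec_sq (fun k => (hpi k).le),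
    Real.sqrt_sq (norm_nonneg _),
    show √(∑ k, (η k - ηb k) ^ 2) = ‖toLp 2 (η - ηb)‖ by simp [EuclideanSpace.norm_eq],
    div_mul_eq_mul_div,
    le_div_iff₀ (mul_pos (hi₀ ▸ hzbpos i₀) (Real.sqrt_pos.2 (hk₀ ▸ hpi k₀))), mul_comm]
  exact hkey

/-- Identifiability for the SBM LQ graphon game: under positivity of the community
aggregates `z̄̄ = QΔ_π s̄̄_η̄` and the contraction condition, the parameter `η̄` is
identifiable with constant `2/(min_i z̄̄_i · √(min_k π_k))`. -/
theorem stmt_17 (K : ℕ) [NeZero K]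
    (Q : Matrix (Fin K) (Fin K) ℝ) (hQsym : Q.IsSymm)
    (hQrange : ∀ i j, Q i j ∈ Set.Icc (0:ℝ) 1)
    (pi : Fin K → ℝ) (hpi : ∀ k, 0 < pi k) (hpisum : ∑ k, pi k = 1)
    (θ₁ : ℝ) (hθ₁ : 0 < θ₁)
    (Ξ : Set (Fin K → ℝ)) (hΞpos : ∀ η ∈ Ξ, ∀ k, 0 ≤ η k)
    (lamMax : ℝ)
    (hlam : IsGreatest
      {μ : ℝ | Module.End.HasEigenvalue (Matrix.toLin' (Q * Matrix.diagonal pi)) μ} lamMax)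
    (hcontr : ∀ η ∈ Ξ, (⨆ k, η k) * lamMax < 1)
    (ηb : Fin K → ℝ) (hηb : ηb ∈ Ξ)
    -- the communities: a measurable partition of [0,1] with measures π_k
    (C : Fin K → Set ℝ) (hCmeas : ∀ k, MeasurableSet (C k))
    (hCdisj : Pairwise (Function.onFun Disjoint C))
    (hCcover : (⋃ k, C k) = Set.Icc (0:ℝ) 1)
    (hCvol : ∀ k, volume (C k) = ENNReal.ofReal (pi k))
    -- the piecewise-constant graphon equilibrium with community values s̄̄_η
    (s : (Fin K → ℝ) → ℝ → ℝ)
    (hs : ∀ η ∈ Ξ, ∀ k, ∀ x ∈ C k,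
      s η x = (θ₁ • ((1 - Matrix.diagonal η * Q * Matrix.diagonal pi)⁻¹).mulVec 1) k)
    -- the community aggregates, assumed strictly positive
    (zb : Fin K → ℝ)
    (hzb : zb = (Q * Matrix.diagonal pi).mulVec
      (θ₁ • ((1 - Matrix.diagonal ηb * Q * Matrix.diagonal pi)⁻¹).mulVec 1))
    (hzbpos : ∀ i, 0 < zb i) :
    ∀ η ∈ Ξ,
      Real.sqrt (∑ k, (η k - ηb k) ^ 2) ≤
        (2 / ((⨅ i, zb i) * Real.sqrt (⨅ k, pi k))) *
          Real.sqrt (∫ x in Set.Icc (0:ℝ) 1, (s η x - s ηb x) ^ 2) :=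
  stmt_17_general K Q hQsym hQrange pi hpi θ₁ Ξ hΞpos lamMax hlam hcontr ηb hηb C hCmeas hCdisj
    hCcover hCvol s hs zb hzb hzbpos
end
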